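/- Let Φ be a graph property, k a positive integer, d = k(k−1)/2, let w be the Hamming weight of the f-vector f^{Φ,k}, and set β = d − w. If Φ is not trivially false on k-vertex graphs (i.e., there exists a graph on k vertices satisfying Φ), then at least one of the h-vector entries h^{Φ,k}_{β+1}, h^{Φ,k}_{β+2}, …, h^{Φ,k}_d is nonzero. -/

import Mathlib

/-!
Put `d = k(k-1)/2`, `F(X) = ∑ fᵢ Xⁱ` and `H(X) = ∑ fᵢ Xⁱ (1 - X)^(d-i) = ∑ h_ℓ X^ℓ`.
Substituting `X / (1 + X)` inverts the relation: `F(X) = ∑ h_ℓ X^ℓ (1 + X)^(d-ℓ)`.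
If `h_ℓ = 0` for all `ℓ > d - w`, every term is divisible by `(1 + X)^w`, so `-1` is a root
of `F` of multiplicity at least `w`. But `F ≠ 0` has at most `w` nonzero coefficients, and a
nonzero root of a polynomial with `s` terms has multiplicity less than `s` in characteristic
zero (strip powers of `X`, then differentiate).
-/

open SimpleGraph

/-- A graph property: for each number of vertices `n`, a predicate on simple graphs
with vertex set `Fin n`. -/
abbrev GraphProperty := ∀ n : ℕ, SimpleGraph (Fin n) → Prop

/-- Invariance of a graph property under graph isomorphism. -/
def Invariant (Φ : GraphProperty) : Prop :=
  ∀ (n : ℕ) (G G' : SimpleGraph (Fin n)), Nonempty (G ≃g G') → (Φ n G ↔ Φ n G')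

/-- The number of edges of a graph. -/
noncomputable def edgeCount {V : Type} (G : SimpleGraph V) : ℕ := Nat.card G.edgeSet

/-- The `i`-th entry of the f-vector of `Φ` and `k`. -/
noncomputable def fVec (Φ : GraphProperty) (k i : ℕ) : ℕ :=
  Nat.card {L : SimpleGraph (Fin k) // edgeCount L = i ∧ Φ k L}

/-- The `ℓ`-th entry of the h-vector of `Φ` and `k`. -/
noncomputable def hVec (Φ : GraphProperty) (k ℓ : ℕ) : ℚ :=
  ∑ i ∈ Finset.range (ℓ + 1),
    (-1 : ℚ) ^ (ℓ - i) * ((k * (k - 1) / 2 - i).choose (ℓ - i) : ℚ) * (fVec Φ k i : ℚ)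

/-- The Hamming weight of the f-vector `f^{Φ,k}`: the number of indices
`i ∈ {0,…,k(k−1)/2}` with `f_i ≠ 0`. -/
noncomputable def hammingWeight (Φ : GraphProperty) (k : ℕ) : ℕ :=
  ((Finset.range (k * (k - 1) / 2 + 1)).filter (fun i => fVec Φ k i ≠ 0)).card

open Polynomial Finset

namespace Polynomial

variable {R K : Type*}

theorem card_support_le_card_support_X_mul [Semiring R] (p : R[X]) :
    #p.support ≤ #(X * p).support :=
  card_le_card_of_injOn (· + 1)
    (fun n hn => by simpa only [mem_coe, mem_support_iff, coeff_X_mul] using hn)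
    (add_left_injective 1).injOn

theorem card_support_derivative_lt [Semiring R] {p : R[X]} (h : p.coeff 0 ≠ 0) :
    #(derivative p).support < #p.support := by
  have hsub : (derivative p).support ⊆ (p.support.erase 0).image (· - 1) := by
    intro n hn
    rw [mem_support_iff, coeff_derivative] at hn
    refine mem_image.mpr ⟨n + 1, mem_erase.mpr ⟨n.succ_ne_zero, ?_⟩, rfl⟩
    exact mem_support_iff.mpr fun h0 => hn (by rw [h0, zero_mul])
  calc #(derivative p).support ≤ #((p.support.erase 0).image (· - 1)) := card_le_card hsub
    _ ≤ #(p.support.erase 0) := card_image_le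
    _ < #p.support := card_erase_lt_of_mem (mem_support_iff.mpr h)

theorem rootMultiplicity_lt_card_support [CommRing R] [IsDomain R] [CharZero R]
    {p : R[X]} (hp : p ≠ 0) {a : R} (ha : a ≠ 0) : p.rootMultiplicity a < #p.support := by
  induction hn : p.natDegree using Nat.strong_induction_on generalizing p with
  | _ n ih =>
  by_cases hroot : p.IsRoot a
  swap
  · rw [rootMultiplicity_eq_zero hroot]
    exact card_pos.mpr (support_nonempty.mpr hp)
  have hdeg : p.natDegree ≠ 0 :=
    (natDegree_pos_of_aeval_root hp (z := a) (by simpa using hroot) fun _ h => h).ne'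
  by_cases h0 : p.coeff 0 = 0
  · obtain ⟨q, rfl⟩ := X_dvd_iff.mpr h0
    have hq : q ≠ 0 := right_ne_zero_of_mul hp
    have hX : rootMultiplicity a X = 0 := rootMultiplicity_eq_zero (by simpa using ha)
    have hlt := ih _ (by rw [← hn, natDegree_X_mul hq]; omega) hq rfl
    rw [rootMultiplicity_mul hp, hX, zero_add]
    exact hlt.trans_le (card_support_le_card_support_X_mul q)
  · have hd : derivative p ≠ 0 := fun h => hdeg (derivative_eq_zero.mp h)
    have hmult := derivative_rootMultiplicity_of_root hroot
    have hpos := (rootMultiplicity_pos hp).mpr hroot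
    have hlt := ih _ (hn ▸ natDegree_derivative_lt hdeg) hd rfl
    have hcard := card_support_derivative_lt h0
    omega

theorem coeff_one_sub_X_pow [CommRing R] (m j : ℕ) :
    ((1 - X : R[X]) ^ m).coeff j = (-1) ^ j * m.choose j := by
  have : (1 - X : R[X]) = C (-1) * X + 1 := by simp; ring
  rw [this, add_pow, finsetSum_coeff]
  simp only [one_pow, mul_one, mul_pow, ← C_pow, ← C_eq_natCast, coeff_mul_C, coeff_C_mul,
    coeff_X_pow, mul_ite, mul_one, mul_zero, ite_mul, zero_mul, sum_ite_eq, mem_range]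
  split_ifs with h
  · rfl
  · rw [Nat.choose_eq_zero_of_lt (by omega)]; simp

theorem coeff_sum_C_mul_X_pow_mul_one_sub_X_pow [CommRing R] (f : ℕ → R) {n ℓ : ℕ}
    (hℓ : ℓ ≤ n) :
    (∑ i ∈ range (n + 1), C (f i) * X ^ i * (1 - X) ^ (n - i)).coeff ℓ =
      ∑ i ∈ range (ℓ + 1), (-1) ^ (ℓ - i) * ((n - i).choose (ℓ - i) : R) * f i := by
  simp only [finsetSum_coeff, mul_assoc, coeff_C_mul, coeff_X_pow_mul', coeff_one_sub_X_pow]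
  rw [← sum_subset (range_subset_range.mpr (by omega : ℓ + 1 ≤ n + 1))]
  · refine sum_congr rfl fun i hi => ?_
    rw [if_pos (Nat.lt_succ_iff.mp (mem_range.mp hi))]
    ring
  · intro i _ hi
    rw [if_neg (by simpa [Nat.lt_succ_iff] using hi), mul_zero]

theorem coeff_sum_range_C_mul_X_pow [Semiring R] (f : ℕ → R) (n j : ℕ) :
    (∑ i ∈ range (n + 1), C (f i) * X ^ i).coeff j = if j ≤ n then f j else 0 := by
  simp [finsetSum_coeff]

/-- `(1 + X) ^ n * p (X / (1 + X))`, written as a polynomial. -/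
noncomputable def oneAddTransform [Semiring R] (n : ℕ) (p : R[X]) : R[X] :=
  ∑ ℓ ∈ range (n + 1), C (p.coeff ℓ) * X ^ ℓ * (1 + X) ^ (n - ℓ)

theorem one_add_X_pow_dvd_oneAddTransform [CommSemiring R] {n w : ℕ} {p : R[X]}
    (h : ∀ ℓ ≤ n, n < ℓ + w → p.coeff ℓ = 0) : (1 + X) ^ w ∣ oneAddTransform n p := by
  refine dvd_sum fun ℓ hℓ => ?_
  rw [mem_range] at hℓ
  by_cases hlt : n < ℓ + w
  · simp [h ℓ (by omega) hlt]
  · exact dvd_mul_of_dvd_right (pow_dvd_pow _ (by omega)) _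

theorem eval_oneAddTransform [Field K] {n : ℕ} {p : K[X]} (hp : p.natDegree ≤ n) {x : K}
    (hx : 1 + x ≠ 0) : (oneAddTransform n p).eval x = (1 + x) ^ n * p.eval (x / (1 + x)) := by
  rw [oneAddTransform, eval_finsetSum, p.eval_eq_sum_range' (Nat.lt_succ_of_le hp), mul_sum]
  refine sum_congr rfl fun ℓ hℓ => ?_
  rw [← Nat.sub_add_cancel (Nat.lt_succ_iff.mp (mem_range.mp hℓ)), pow_add]
  simp only [eval_mul, eval_C, eval_pow, eval_X, eval_add, eval_one, Nat.add_sub_cancel, div_pow]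
  field_simp

theorem sum_C_mul_X_pow_eq_oneAddTransform [Field K] [Infinite K] (f : ℕ → K) (n : ℕ) :
    ∑ i ∈ range (n + 1), C (f i) * X ^ i =
      oneAddTransform n (∑ i ∈ range (n + 1), C (f i) * X ^ i * (1 - X) ^ (n - i)) := by
  have hdeg : (∑ i ∈ range (n + 1), C (f i) * X ^ i * (1 - X) ^ (n - i)).natDegree ≤ n := by
    refine natDegree_sum_le_of_forall_le _ _ fun i hi => ?_
    have := mem_range.mp hi
    compute_degree
    omega
  refine eq_of_infinite_eval_eq _ _ ((Set.finite_singleton (-1 : K)).infinite_compl.mono ?_)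
  intro x hx
  have hx : 1 + x ≠ 0 := fun h => hx (eq_neg_of_add_eq_zero_right h)
  rw [Set.mem_ofPred_eq, eval_oneAddTransform hdeg hx, eval_finsetSum, eval_finsetSum, mul_sum]
  refine sum_congr rfl fun i hi => ?_
  rw [← Nat.sub_add_cancel (Nat.lt_succ_iff.mp (mem_range.mp hi)), pow_add]
  simp only [eval_mul, eval_C, eval_pow, eval_X, eval_sub, eval_one, Nat.add_sub_cancel, div_pow]
  rw [one_sub_div hx, add_sub_cancel_right, div_pow, one_pow]
  field_simp

end Polynomial

theorem edgeCount_le (k : ℕ) (G : SimpleGraph (Fin k)) : edgeCount G ≤ k * (k - 1) / 2 := by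
  classical
  rw [edgeCount, Nat.card_eq_fintype_card, ← SimpleGraph.edgeFinset_card, ← Nat.choose_two_right]
  simpa using G.card_edgeFinset_le_card_choose_two

theorem fVec_edgeCount_ne_zero {Φ : GraphProperty} {k : ℕ} {G : SimpleGraph (Fin k)}
    (hG : Φ k G) : fVec Φ k (edgeCount G) ≠ 0 := by
  classical
  exact (Nat.card_pos_iff.mpr ⟨⟨⟨G, rfl, hG⟩⟩, inferInstance⟩).ne'

theorem stmt10_general (Φ : GraphProperty) (k : ℕ)
    (hnt : ∃ H : SimpleGraph (Fin k), Φ k H) :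
    ∃ ℓ : ℕ, ((k * (k - 1) / 2 : ℕ) : ℤ) - (hammingWeight Φ k : ℤ) + 1 ≤ (ℓ : ℤ) ∧
      ℓ ≤ k * (k - 1) / 2 ∧ hVec Φ k ℓ ≠ 0 := by
  by_contra! hzero
  obtain ⟨G, hG⟩ := hnt
  set d := k * (k - 1) / 2
  set w := hammingWeight Φ k
  set F : ℚ[X] := ∑ i ∈ range (d + 1), C (fVec Φ k i : ℚ) * X ^ i with hF
  have hcoeff (j : ℕ) : F.coeff j = if j ≤ d then (fVec Φ k j : ℚ) else 0 :=
    coeff_sum_range_C_mul_X_pow _ d j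
  have hF0 : F ≠ 0 := fun h => by
    have := hcoeff (edgeCount G)
    rw [if_pos (edgeCount_le k G), h, coeff_zero] at this
    exact fVec_edgeCount_ne_zero hG (by exact_mod_cast this.symm)
  have hsupp : #F.support ≤ w := card_le_card fun j hj => by
    rw [mem_support_iff, hcoeff] at hj
    split_ifs at hj with hjd
    · exact mem_filter.mpr ⟨mem_range.mpr (by omega), by exact_mod_cast hj⟩
    · exact absurd rfl hj
  have hdvd : (1 + X) ^ w ∣ F := by
    rw [hF, sum_C_mul_X_pow_eq_oneAddTransform]
    refine one_add_X_pow_dvd_oneAddTransform fun ℓ hℓ hlt => ?_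
    rw [coeff_sum_C_mul_X_pow_mul_one_sub_X_pow _ hℓ]
    exact hzero ℓ (by omega) hℓ
  have hmult : w ≤ F.rootMultiplicity (-1) := by
    rw [le_rootMultiplicity_iff hF0, map_neg, C_1, sub_neg_eq_add, add_comm]
    exact hdvd
  have := rootMultiplicity_lt_card_support hF0 (neg_ne_zero.mpr one_ne_zero)
  omega

/-- If `Φ` is not trivially false on `k`-vertex graphs, then some entry `h_ℓ` of the
h-vector with `d − w + 1 ≤ ℓ ≤ d` is nonzero, where `d = k(k−1)/2` and `w` is the Hamming
weight of the f-vector. -/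
theorem stmt10 (Φ : GraphProperty) (hΦ : Invariant Φ) (k : ℕ) (hk : 0 < k)
    (hnt : ∃ H : SimpleGraph (Fin k), Φ k H) :
    ∃ ℓ : ℕ, ((k * (k - 1) / 2 : ℕ) : ℤ) - (hammingWeight Φ k : ℤ) + 1 ≤ (ℓ : ℤ) ∧
      ℓ ≤ k * (k - 1) / 2 ∧ hVec Φ k ℓ ≠ 0 :=
  stmt10_general Φ k hnt
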